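/- arXiv:1809.00369 — 5 statements merged into one kernel-verified Lean document; each statement's English description precedes it below -/
import Mathlib

section
/- Let n, s be positive integers and write n − s(s+1)/2 = ⌊n/(s+1) − s/2⌋·(s+1) + e with 0 ≤ e ≤ s. Let ℘(s,n) = (p₁, …, p_{s+1}) be defined by p_j = ⌊(n − ∑_{1 ≤ i ≤ j−1} p_i)/(s+2−j) − (s+1−j)/2⌋ for 1 ≤ j ≤ s+1. Then p_j = p₁ + j − 1 for 1 ≤ j ≤ s+1−e and p_j = p₁ + j for s+2−e ≤ j ≤ s+1. In particular p₁ < p₂ < ⋯ < p_{s+1} and p₁ + ⋯ + p_{s+1} = n. -/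
/-!
Put `P = ⌊n/(s+1) − s/2⌋`, so that `n = (s+1)P + s(s+1)/2 + e`. If `k` parts remain to be chosen
and what remains of `n` is `k m + k(k−1)/2 + r` with `0 ≤ r < k`, the next part
`⌊remainder/k − (k−1)/2⌋` is exactly `m`. By induction on `j`, after `j` parts the remainder is
`k(P+j) + k(k−1)/2 + min(e,k)` with `k = s+1−j`, which has this shape with `m = P+j, r = e` while
`e < k` and with `m = P+j+1, r = 0` afterwards. Hence `p_{j+1} = P + j + [s < j+e]`, and after all
`s+1` parts nothing remains.
-/

/-- Partial sums `p₁ + ⋯ + p_j` of the tuple `℘(s,n)`, defined recursively: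
`p_{j+1} = ⌊(n − (p₁ + ⋯ + p_j))/(s+1−j) − (s−j)/2⌋` (0-indexed `j`). -/
def wpSum (s n : ℕ) : ℕ → ℤ
  | 0 => 0
  | j + 1 => wpSum s n j +
      ⌊((n : ℚ) - wpSum s n j) / ((s : ℚ) + 1 - j) - ((s : ℚ) - j) / 2⌋

/-- The entry `p_{j+1}` of `℘(s,n)` (0-indexed). -/
def wp (s n : ℕ) (j : ℕ) : ℤ := wpSum s n (j + 1) - wpSum s n j

theorem floor_div_sub_half_eq {K : Type*} [Field K] [LinearOrder K] [IsStrictOrderedRing K]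
    [FloorRing K] {k r : K} (m : ℤ) (hr : 0 ≤ r) (hrk : r < k) :
    ⌊(k * m + k * (k - 1) / 2 + r) / k - (k - 1) / 2⌋ = m := by
  have hk : 0 < k := hr.trans_lt hrk
  have harg : (k * m + k * (k - 1) / 2 + r) / k - (k - 1) / 2 = m + r / k := by
    field_simp
    ring
  rw [harg, Int.floor_intCast_add, Int.floor_eq_zero_iff.2 ⟨by positivity, (div_lt_one hk).2 hrk⟩,
    add_zero]

theorem Int.cast_mul_add_one_div_two {K : Type*} [Field K] [CharZero K] (s : ℤ) :
    ((s * (s + 1) / 2 : ℤ) : K) = s * (s + 1) / 2 := by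
  rw [Int.cast_div (even_iff_two_dvd.1 (Int.even_mul_succ_self s)) (by norm_num)]
  push_cast
  ring

section

variable (s e : ℕ) (P : ℤ)

def wpFormula (j : ℕ) : ℤ := P + j + if s < j + e then 1 else 0

/-- With `k = s + 1 - j` parts left, this is `k (P + j) + k (k - 1) / 2 + min e k`, the sum of
`wpFormula s e P i` over `j ≤ i ≤ s`. -/
def wpTail (j : ℕ) : ℚ :=
  ((s : ℚ) + 1 - j) * (P + j) + ((s : ℚ) + 1 - j) * ((s : ℚ) - j) / 2
    + min (e : ℚ) ((s : ℚ) + 1 - j)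

variable {s e P}

theorem wpTail_succ (j : ℕ) : wpTail s e P (j + 1) = wpTail s e P j - wpFormula s e P j := by
  unfold wpTail wpFormula
  push_cast
  split_ifs with h
  · have h' : (s : ℚ) + 1 ≤ j + e := by exact_mod_cast h
    rw [min_eq_right (by linarith), min_eq_right (by linarith)]
    ring
  · have h' : (j : ℚ) + e ≤ s := by exact_mod_cast (not_lt.1 h)
    rw [min_eq_left (by linarith), min_eq_left (by linarith)]
    ring

theorem floor_wpTail_div {j : ℕ} (hj : j ≤ s) :
    ⌊wpTail s e P j / ((s : ℚ) + 1 - j) - ((s : ℚ) - j) / 2⌋ = wpFormula s e P j := by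
  have hjs : (j : ℚ) ≤ s := by exact_mod_cast hj
  have hsj : (s : ℚ) - j = ((s : ℚ) + 1 - j) - 1 := by ring
  unfold wpTail wpFormula
  rw [hsj]
  by_cases h : s < j + e
  · have h' : (s : ℚ) + 1 ≤ j + e := by exact_mod_cast h
    rw [if_pos h, ← floor_div_sub_half_eq (P + j + 1) le_rfl (by linarith : (0 : ℚ) < s + 1 - j),
      min_eq_right (by linarith)]
    push_cast
    ring_nf
  · have h' : (j : ℚ) + e ≤ s := by exact_mod_cast (not_lt.1 h)
    rw [if_neg h, add_zero, min_eq_left (by linarith)]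
    exact_mod_cast
      floor_div_sub_half_eq (P + j) (Nat.cast_nonneg e) (by linarith : (e : ℚ) < s + 1 - j)

theorem cast_eq_wpTail_zero {n : ℕ} (he : e ≤ s)
    (h : (n : ℤ) - s * (s + 1) / 2 = P * ((s : ℤ) + 1) + e) : (n : ℚ) = wpTail s e P 0 := by
  have hQ := congrArg (Int.cast : ℤ → ℚ) h
  rw [Int.cast_sub, Int.cast_mul_add_one_div_two] at hQ
  have he' : (e : ℚ) ≤ s + 1 - (0 : ℕ) := by
    rw [Nat.cast_zero, sub_zero]
    exact_mod_cast he.trans (Nat.le_succ s)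
  rw [wpTail, min_eq_left he']
  push_cast at hQ ⊢
  linarith

variable {n : ℕ}

theorem wp_eq_floor (j : ℕ) :
    wp s n j = ⌊((n : ℚ) - wpSum s n j) / ((s : ℚ) + 1 - j) - ((s : ℚ) - j) / 2⌋ := by
  rw [wp, wpSum, add_sub_cancel_left]

theorem sub_wpSum_eq_wpTail (hn : (n : ℚ) = wpTail s e P 0) :
    ∀ j ≤ s + 1, (n : ℚ) - wpSum s n j = wpTail s e P j
  | 0, _ => by simp [wpSum, hn]
  | j + 1, hj => by
    have ih := sub_wpSum_eq_wpTail hn j (by omega)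
    have hwp : wp s n j = wpFormula s e P j := by rw [wp_eq_floor, ih, floor_wpTail_div (by omega)]
    rw [wpTail_succ, ← hwp, ← ih, wp]
    push_cast
    ring

theorem wp_eq_wpFormula (hn : (n : ℚ) = wpTail s e P 0) {j : ℕ} (hj : j ≤ s) :
    wp s n j = wpFormula s e P j := by
  rw [wp_eq_floor, sub_wpSum_eq_wpTail hn j (by omega), floor_wpTail_div hj]

theorem sum_range_wp (hn : (n : ℚ) = wpTail s e P 0) :
    ∑ j ∈ Finset.range (s + 1), wp s n j = n := by
  have hlast := sub_wpSum_eq_wpTail hn (s + 1) le_rfl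
  simp only [wpTail, Nat.cast_add, Nat.cast_one, sub_self, zero_mul, zero_div, zero_add,
    min_eq_right (Nat.cast_nonneg e), sub_eq_zero] at hlast
  have h0 : wpSum s n 0 = 0 := rfl
  simp only [wp]
  rw [Finset.sum_range_sub (wpSum s n), h0, sub_zero]
  exact_mod_cast hlast.symm

end

theorem wp_entries_general (s n : ℕ) (e : ℕ) (he : e ≤ s)
    (heq : (n : ℤ) - (s * (s + 1)) / 2
      = ⌊(n : ℚ) / ((s : ℚ) + 1) - (s : ℚ) / 2⌋ * ((s : ℤ) + 1) + e) :
    (∀ j, j + e ≤ s → wp s n j = wp s n 0 + j) ∧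
    (∀ j, s < j + e → j ≤ s → wp s n j = wp s n 0 + j + 1) ∧
    (∀ i j, i < j → j ≤ s → wp s n i < wp s n j) ∧
    (∑ j ∈ Finset.range (s + 1), wp s n j) = n := by
  have hn := cast_eq_wpTail_zero he heq
  have hwp (j : ℕ) (hj : j ≤ s) := wp_eq_wpFormula hn hj
  have hwp0 := hwp 0 (Nat.zero_le s)
  simp only [wpFormula] at hwp hwp0
  refine ⟨fun j hj => ?_, fun j hj hjs => ?_, fun i j hij hjs => ?_, sum_range_wp hn⟩
  · rw [hwp j (by omega), hwp0]
    split_ifs <;> omega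
  · rw [hwp j hjs, hwp0]
    split_ifs <;> omega
  · rw [hwp i (by omega), hwp j hjs]
    split_ifs <;> omega

theorem wp_entries (s n : ℕ) (hs : 1 ≤ s) (hn : 1 ≤ n) (e : ℕ) (he : e ≤ s)
    (heq : (n : ℤ) - (s * (s + 1)) / 2
      = ⌊(n : ℚ) / ((s : ℚ) + 1) - (s : ℚ) / 2⌋ * ((s : ℤ) + 1) + e) :
    (∀ j, j + e ≤ s → wp s n j = wp s n 0 + j) ∧
    (∀ j, s < j + e → j ≤ s → wp s n j = wp s n 0 + j + 1) ∧
    (∀ i j, i < j → j ≤ s → wp s n i < wp s n j) ∧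
    (∑ j ∈ Finset.range (s + 1), wp s n j) = n :=
  wp_entries_general s n e he heq
end

section
/- Let ℑ(s,n) denote the set of α = (a₁, …, a_{s+1}) ∈ Z^{s+1} with a₁ < a₂ < ⋯ < a_{s+1} and ∑ aᵢ = n. If v = (v₁, …, v_{s+1}) ∈ ℑ(s,n) is such that no element of ℑ(s,n) is an elementary modification of v (i.e. v + η(i,j) ∉ ℑ(s,n) for all 1 ≤ i < j ≤ s+1), then vᵢ + 1 ≤ v_{i+1} ≤ vᵢ + 2 for all 1 ≤ i ≤ s, and v_{i+1} = vᵢ + 2 for at most one index i. -/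
/-!
A gap `v (i+1) - v i ≥ 3` could be narrowed by the move `v + η(i, i+1)`, and two gaps of size `2`
at positions `a < b` by `v + η(a, b+1)`: both moves keep the sum and, since they only shrink
those gaps by one (or the single gap by two), keep the tuple strictly increasing.
-/

open Finset

/-- `v + η(i, j)`: add one at position `i` and subtract one at position `j`. -/
def elementaryModification {ι R : Type*} [DecidableEq ι] [AddGroupWithOne R] (v : ι → R)
    (i j : ι) : ι → R :=
  fun k => v k + (if k = i then 1 else 0) - (if k = j then 1 else 0)

theorem sum_elementaryModification {ι R : Type*} [Fintype ι] [DecidableEq ι]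
    [AddCommGroupWithOne R] (v : ι → R) (i j : ι) :
    ∑ k, elementaryModification v i j k = ∑ k, v k := by
  simp [elementaryModification, sum_add_distrib, sum_sub_distrib]

theorem strictMono_elementaryModification {m : ℕ} {v : Fin (m + 1) → ℤ} {i j : Fin (m + 1)}
    (h : ∀ k : Fin m,
      v k.castSucc + (if k.castSucc = i then 1 else 0) + (if k.succ = j then 1 else 0) < v k.succ) :
    StrictMono (elementaryModification v i j) := by
  rw [Fin.strictMono_iff_lt_succ]
  intro k
  have hk := h k
  simp only [elementaryModification, Fin.ext_iff, Fin.val_succ, Fin.val_castSucc] at hk ⊢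
  split_ifs at hk ⊢ <;> omega

theorem strictMono_elementaryModification_castSucc_succ_self {m : ℕ} {v : Fin (m + 1) → ℤ}
    (hv : StrictMono v) {i : Fin m} (hi : v i.castSucc + 3 ≤ v i.succ) :
    StrictMono (elementaryModification v i.castSucc i.succ) := by
  refine strictMono_elementaryModification fun k => ?_
  have hk := hv k.castSucc_lt_succ
  simp only [Fin.castSucc_inj, Fin.succ_inj]
  split_ifs <;> subst_vars <;> omega

theorem strictMono_elementaryModification_castSucc_succ {m : ℕ} {v : Fin (m + 1) → ℤ}
    (hv : StrictMono v) {a b : Fin m} (hab : a ≠ b) (ha : v a.castSucc + 2 ≤ v a.succ)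
    (hb : v b.castSucc + 2 ≤ v b.succ) :
    StrictMono (elementaryModification v a.castSucc b.succ) := by
  refine strictMono_elementaryModification fun k => ?_
  have hk := hv k.castSucc_lt_succ
  simp only [Fin.castSucc_inj, Fin.succ_inj]
  split_ifs <;> subst_vars <;> omega

theorem final_tuple_structure_general (s n : ℕ)
    (v : Fin (s + 1) → ℤ) (hv : StrictMono v) (hsum : ∑ i, v i = n)
    (hfinal : ∀ i j : Fin (s + 1), i < j →
      ¬ (StrictMono (fun k => v k + (if k = i then 1 else 0) - (if k = j then 1 else 0)) ∧
        (∑ k, (v k + (if k = i then 1 else 0) - (if k = j then 1 else 0))) = n)) :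
    (∀ i : Fin s, v i.castSucc + 1 ≤ v i.succ ∧ v i.succ ≤ v i.castSucc + 2) ∧
    (∀ i₁ i₂ : Fin s, v i₁.succ = v i₁.castSucc + 2 → v i₂.succ = v i₂.castSucc + 2 →
      i₁ = i₂) := by
  refine ⟨fun i => ⟨hv i.castSucc_lt_succ, ?_⟩, fun i₁ i₂ h₁ h₂ => ?_⟩
  · by_contra! hgap
    exact hfinal _ _ i.castSucc_lt_succ
      ⟨strictMono_elementaryModification_castSucc_succ_self hv (by omega),
        (sum_elementaryModification v _ _).trans hsum⟩
  · by_contra hne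
    wlog hlt : i₁ < i₂ generalizing i₁ i₂
    · exact this i₂ i₁ h₂ h₁ (Ne.symm hne) ((not_lt.mp hlt).lt_of_ne (Ne.symm hne))
    exact hfinal _ _ (Fin.castSucc_lt_succ_iff.mpr hlt.le)
      ⟨strictMono_elementaryModification_castSucc_succ hv hne h₁.ge h₂.ge,
        (sum_elementaryModification v _ _).trans hsum⟩

theorem final_tuple_structure (s n : ℕ) (hs : 1 ≤ s) (hn : 1 ≤ n)
    (v : Fin (s + 1) → ℤ) (hv : StrictMono v) (hsum : ∑ i, v i = n)
    (hfinal : ∀ i j : Fin (s + 1), i < j →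
      ¬ (StrictMono (fun k => v k + (if k = i then 1 else 0) - (if k = j then 1 else 0)) ∧
        (∑ k, (v k + (if k = i then 1 else 0) - (if k = j then 1 else 0))) = n)) :
    (∀ i : Fin s, v i.castSucc + 1 ≤ v i.succ ∧ v i.succ ≤ v i.castSucc + 2) ∧
    (∀ i₁ i₂ : Fin s, v i₁.succ = v i₁.castSucc + 2 → v i₂.succ = v i₂.castSucc + 2 →
      i₁ = i₂) :=
  final_tuple_structure_general s n v hv hsum hfinal
end

section
/- For every α ∈ ℑ(s,n), one has wt(n, α) ≤ ϖ(s,n), where ϖ(s,n) := wt(n, ℘(s,n)). Moreover α ⪯ ℘(s,n) in lexicographic order. -/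
/-!
`℘(s,n)` is the greedy tuple: `p_j` is the largest integer `x` such that the run
`x, x+1, …, x+s+1-j` of consecutive integers still fits into what is left of `n`
(`wp_eq_maxRunStart`). Every entry of a strictly increasing integer tuple `α` summing to `n`
obeys the same bound computed from its own partial sums, and the greedy step
`S ↦ S + maxRunStart m (n - S)` is monotone in `S`, so the partial sums of `α` are dominated by
those of `℘`. At the first index where `α` and `℘` differ this forces `αᵢ < pᵢ`; and since
`α + ℘` is increasing, summation by parts turns the domination into `∑ pᵢ² ≤ ∑ αᵢ²`.
-/

open Finset

section PartialSums

variable {α : Type*} [AddCommGroup α] [LinearOrder α] [IsOrderedAddMonoid α]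

theorem toLex_le_toLex_of_sum_range_le {m : ℕ} {A B : ℕ → α}
    (h : ∀ k ≤ m, ∑ i ∈ range k, A i ≤ ∑ i ∈ range k, B i) :
    toLex (fun i : Fin m => A i) ≤ toLex (fun i : Fin m => B i) := by
  by_contra! hlt
  obtain ⟨i, hprefix, hi⟩ := hlt
  have hprefix_sum : ∑ j ∈ range i, B j = ∑ j ∈ range i, A j :=
    sum_congr rfl fun j hj => hprefix ⟨j, (mem_range.1 hj).trans i.isLt⟩ (mem_range.1 hj)
  have := h (i + 1) i.isLt
  rw [sum_range_succ, sum_range_succ, ← hprefix_sum] at this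
  exact (add_lt_add_right hi _).not_ge this

end PartialSums

section Abel

variable {R : Type*} [CommRing R] [LinearOrder R] [IsStrictOrderedRing R]

theorem mul_sum_range_le_sum_range_mul {c d : ℕ → R} {m : ℕ} (hc : MonotoneOn c (Set.Iic m))
    (hd : ∀ k ≤ m, ∑ i ∈ range k, d i ≤ 0) :
    c m * ∑ i ∈ range (m + 1), d i ≤ ∑ i ∈ range (m + 1), c i * d i := by
  induction m with
  | zero => simp
  | succ m ih =>
    have hc_step : c m ≤ c (m + 1) := hc (by simp) (by simp) (by omega)
    have hd_m : ∑ i ∈ range (m + 1), d i ≤ 0 := hd (m + 1) le_rfl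
    calc c (m + 1) * ∑ i ∈ range (m + 2), d i
        = c (m + 1) * ∑ i ∈ range (m + 1), d i + c (m + 1) * d (m + 1) := by
          rw [sum_range_succ, mul_add]
      _ ≤ c m * ∑ i ∈ range (m + 1), d i + c (m + 1) * d (m + 1) := by
          gcongr ?_ + _
          exact mul_le_mul_of_nonpos_right hc_step hd_m
      _ ≤ ∑ i ∈ range (m + 2), c i * d i := by
          rw [sum_range_succ _ (m + 1)]
          gcongr
          exact ih (hc.mono (Set.Iic_subset_Iic.2 m.le_succ)) fun k hk => hd k (by omega)

theorem sum_range_sq_le_sum_range_sq {A B : ℕ → R} {m : ℕ}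
    (hAB : MonotoneOn (A + B) (Set.Iic m))
    (hle : ∀ k ≤ m, ∑ i ∈ range k, A i ≤ ∑ i ∈ range k, B i)
    (heq : ∑ i ∈ range (m + 1), A i = ∑ i ∈ range (m + 1), B i) :
    ∑ i ∈ range (m + 1), B i ^ 2 ≤ ∑ i ∈ range (m + 1), A i ^ 2 := by
  have habel := mul_sum_range_le_sum_range_mul (d := A - B) hAB fun k hk => by
    simpa [sum_sub_distrib] using hle k hk
  simp only [Pi.sub_apply, Pi.add_apply, sum_sub_distrib, heq, sub_self, mul_zero] at habel
  rw [← sub_nonneg, ← sum_sub_distrib]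
  convert habel using 2
  ring

end Abel

section Runs

/-- The largest `x` with `x + (x+1) + ⋯ + (x+m-1) ≤ r`, see `le_maxRunStart_iff`. -/
def maxRunStart (m : ℕ) (r : ℤ) : ℤ := ⌊(r : ℚ) / m - ((m : ℚ) - 1) / 2⌋

theorem two_mul_sum_range_add (x : ℤ) (m : ℕ) :
    2 * ∑ i ∈ range m, (x + i) = 2 * m * x + m * (m - 1) := by
  induction m with
  | zero => simp
  | succ m ih => rw [sum_range_succ, mul_add, ih]; push_cast; ring

theorem le_maxRunStart_iff {m : ℕ} (hm : 0 < m) {r x : ℤ} :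
    x ≤ maxRunStart m r ↔ ∑ i ∈ range m, (x + i) ≤ r := by
  have hm' : (0 : ℚ) < m := by exact_mod_cast hm
  rw [maxRunStart, Int.le_floor, le_sub_iff_add_le, le_div_iff₀ hm',
    ← mul_le_mul_iff_of_pos_left (two_pos : (0 : ℤ) < 2), two_mul_sum_range_add,
    ← Int.cast_le (R := ℚ)]
  push_cast
  constructor <;> intro h <;> linarith

theorem maxRunStart_one (r : ℤ) : maxRunStart 1 r = r := by
  simp [maxRunStart]

theorem antitone_maxRunStart_sub_self {m : ℕ} (hm : 0 < m) :
    Antitone fun r => maxRunStart m r - r := by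
  intro r r' hr
  dsimp only
  rw [sub_le_sub_iff, ← sub_le_iff_le_add, le_maxRunStart_iff hm,
    ← mul_le_mul_iff_of_pos_left (two_pos : (0 : ℤ) < 2), two_mul_sum_range_add]
  have h := (le_maxRunStart_iff hm).1 (le_refl (maxRunStart m r'))
  rw [← mul_le_mul_iff_of_pos_left (two_pos : (0 : ℤ) < 2), two_mul_sum_range_add] at h
  have hm1 : (1 : ℤ) ≤ m := by exact_mod_cast hm
  nlinarith

theorem maxRunStart_lt_maxRunStart_sub {m : ℕ} (hm : 0 < m) (r : ℤ) :
    maxRunStart (m + 1) r < maxRunStart m (r - maxRunStart (m + 1) r) := by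
  set q := maxRunStart (m + 1) r
  have h := (le_maxRunStart_iff m.succ_pos).1 (le_refl q)
  rw [sum_range_succ'] at h
  rw [Int.lt_iff_add_one_le, le_maxRunStart_iff hm, le_sub_iff_add_le]
  convert h using 2
  · exact sum_congr rfl fun i _ => by push_cast; ring
  · simp

theorem add_le_of_strictMonoOn_Iio {A : ℕ → ℤ} {m : ℕ} (hA : StrictMonoOn A (Set.Iio m))
    {i : ℕ} (hi : i < m) : A 0 + i ≤ A i := by
  induction i with
  | zero => simp
  | succ i ih =>
    have := hA (show i < m by omega) hi i.lt_succ_self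
    push_cast
    linarith [ih (by omega)]

theorem le_maxRunStart_sum_of_strictMonoOn {A : ℕ → ℤ} {m : ℕ} (hm : 0 < m)
    (hA : StrictMonoOn A (Set.Iio m)) : A 0 ≤ maxRunStart m (∑ i ∈ range m, A i) :=
  (le_maxRunStart_iff hm).2 <| sum_le_sum fun _ hi =>
    add_le_of_strictMonoOn_Iio hA (mem_range.1 hi)

end Runs

section GreedyTuple

variable {s n : ℕ}

theorem wpSum_succ (s n k : ℕ) : wpSum s n (k + 1) = wpSum s n k + wp s n k := by
  rw [wp]; ring

theorem wpSum_eq_sum_range (s n k : ℕ) : wpSum s n k = ∑ i ∈ range k, wp s n i := by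
  induction k with
  | zero => rfl
  | succ k ih => rw [wpSum_succ, ih, sum_range_succ]

theorem wp_eq_maxRunStart {k : ℕ} (hk : k ≤ s) :
    wp s n k = maxRunStart (s + 1 - k) (n - wpSum s n k) := by
  rw [wp, wpSum, add_sub_cancel_left, maxRunStart]
  push_cast [Nat.cast_sub (by omega : k ≤ s + 1)]
  ring_nf

theorem wpSum_self_add_one (s n : ℕ) : wpSum s n (s + 1) = n := by
  rw [wpSum_succ, wp_eq_maxRunStart le_rfl, Nat.add_sub_cancel_left, maxRunStart_one]
  ring

theorem wp_lt_wp_add_one {k : ℕ} (hk : k < s) : wp s n k < wp s n (k + 1) := by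
  rw [wp_eq_maxRunStart hk.le, wp_eq_maxRunStart hk, wpSum_succ, wp_eq_maxRunStart hk.le,
    show s + 1 - k = s - k + 1 by omega, show s + 1 - (k + 1) = s - k by omega, ← sub_sub]
  exact maxRunStart_lt_maxRunStart_sub (by omega) _

theorem strictMonoOn_wp : StrictMonoOn (wp s n) (Set.Iic s) :=
  strictMonoOn_of_lt_succ Set.ordConnected_Iic fun k _ _ hk => by
    simp only [Order.succ_eq_add_one, Set.mem_Iic] at hk
    exact wp_lt_wp_add_one (by omega)

theorem sum_range_le_wpSum {A : ℕ → ℤ} (hA : StrictMonoOn A (Set.Iic s))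
    (hsum : ∑ i ∈ range (s + 1), A i = n) :
    ∀ k ≤ s + 1, ∑ i ∈ range k, A i ≤ wpSum s n k := by
  intro k
  induction k with
  | zero => simp [wpSum]
  | succ k ih =>
    intro hk
    have htail : ∑ i ∈ range (s + 1 - k), A (k + i) = n - ∑ i ∈ range k, A i := by
      rw [← hsum, show s + 1 = k + (s + 1 - k) by omega, sum_range_add]
      simp
    have hA_tail : StrictMonoOn (fun i => A (k + i)) (Set.Iio (s + 1 - k)) :=
      fun i (hi : i < s + 1 - k) j (hj : j < s + 1 - k) hij =>
        hA (show k + i ≤ s by omega) (show k + j ≤ s by omega) (by omega)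
    have hAk := le_maxRunStart_sum_of_strictMonoOn (by omega) hA_tail
    rw [add_zero, htail] at hAk
    have hmono := antitone_maxRunStart_sub_self (m := s + 1 - k) (by omega)
      (sub_le_sub_left (ih (by omega)) (n : ℤ))
    rw [sum_range_succ, wpSum_succ, wp_eq_maxRunStart (by omega)]
    dsimp only at hmono
    linarith

end GreedyTuple

theorem wt_le_wpWeight_general (s n : ℕ)
    (a : Fin (s + 1) → ℤ) (ha : StrictMono a) (hsum : ∑ i, a i = n) :
    ((n : ℤ) ^ 2 - ∑ i, (a i) ^ 2) / 2
        ≤ ((n : ℤ) ^ 2 - ∑ i : Fin (s + 1), (wp s n i) ^ 2) / 2 ∧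
      toLex a ≤ toLex (fun i : Fin (s + 1) => wp s n i) := by
  set A : ℕ → ℤ := fun i => if h : i < s + 1 then a ⟨i, h⟩ else 0
  have hAa : (fun i : Fin (s + 1) => A i) = a := funext fun i => dif_pos i.isLt
  have hA : StrictMonoOn A (Set.Iic s) := fun i (hi : i ≤ s) j (hj : j ≤ s) hij => by
    simpa [A, hi, hj] using
      ha (show (⟨i, by omega⟩ : Fin (s + 1)) < ⟨j, by omega⟩ from hij)
  have hsumA : ∑ i ∈ range (s + 1), A i = n := by
    rw [← Fin.sum_univ_eq_sum_range, hAa, hsum]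
  have hdom : ∀ k ≤ s + 1, ∑ i ∈ range k, A i ≤ ∑ i ∈ range k, wp s n i := fun k hk =>
    wpSum_eq_sum_range s n k ▸ sum_range_le_wpSum hA hsumA k hk
  rw [← hAa]
  refine ⟨Int.ediv_le_ediv two_pos (sub_le_sub_left ?_ _), toLex_le_toLex_of_sum_range_le hdom⟩
  rw [Fin.sum_univ_eq_sum_range (fun i => A i ^ 2),
    Fin.sum_univ_eq_sum_range (fun i => wp s n i ^ 2)]
  refine sum_range_sq_le_sum_range_sq (hA.add strictMonoOn_wp).monotoneOn
    (fun k hk => hdom k (by omega)) ?_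
  rw [hsumA, ← wpSum_eq_sum_range, wpSum_self_add_one]

theorem wt_le_wpWeight (s n : ℕ) (hs : 1 ≤ s) (hn : 1 ≤ n)
    (a : Fin (s + 1) → ℤ) (ha : StrictMono a) (hsum : ∑ i, a i = n) :
    ((n : ℤ) ^ 2 - ∑ i, (a i) ^ 2) / 2
        ≤ ((n : ℤ) ^ 2 - ∑ i : Fin (s + 1), (wp s n i) ^ 2) / 2 ∧
      toLex a ≤ toLex (fun i : Fin (s + 1) => wp s n i) :=
  wt_le_wpWeight_general s n a ha hsum
end

section
/- Let s ≥ 2 and (s+1)(s+2) ≤ 2n, and let v(s,n) := (1, 2, …, s−1, n − s(s−1)/2 adjusted so that v has s entries: vᵢ = i for 1 ≤ i ≤ s−1 and v_s = n − s(s−1)/2). Then for every α ∈ P(s−1, n) (strictly increasing positive integer s-tuples summing to n), v(s,n) ⪯ α in lexicographic order and wt(n, v(s,n)) ≤ wt(n, α). -/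
/-!
Since `α` is strictly increasing with `α₁ ≥ 1`, we have `αᵢ ≥ i = vᵢ` for `i < s`, while both
tuples sum to `n`. The first position where they differ is therefore some `i < s` with `vᵢ < αᵢ`
(agreement on all earlier positions would force `α = v`), which gives `v ⪯ α`. For the weight,
moving the excess `dᵢ = αᵢ - i` of each early entry onto the last one only increases `∑ αᵢ²`,
since `αᵢ² - i² ≤ 2 dᵢ α_s` while `(α_s + ∑ dᵢ)² - α_s² ≥ 2 α_s ∑ dᵢ`.
-/

theorem Fin.toLex_le_of_castSucc_le_of_sum_eq {α : Type*} [AddCancelCommMonoid α] [LinearOrder α]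
    {t : ℕ} {a b : Fin (t + 1) → α} (hle : ∀ i : Fin t, b i.castSucc ≤ a i.castSucc)
    (hsum : ∑ i, b i = ∑ i, a i) : toLex b ≤ toLex a := by
  refine not_lt.1 ?_
  rintro ⟨i, hprefix, hlt⟩
  induction i using Fin.lastCases with
  | last =>
    have hinit : ∀ j : Fin t, b j.castSucc = a j.castSucc := fun j =>
      (hprefix _ (Fin.castSucc_lt_last j)).symm
    rw [Fin.sum_univ_castSucc, Fin.sum_univ_castSucc, Finset.sum_congr rfl fun j _ => hinit j]
      at hsum
    exact hlt.ne (add_left_cancel hsum).symm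
  | cast k => exact (hle k).not_gt hlt

theorem Fin.sum_sq_le_of_castSucc_le_of_sum_eq {R : Type*} [CommRing R] [LinearOrder R]
    [IsStrictOrderedRing R] {t : ℕ} {a b : Fin (t + 1) → R}
    (hle : ∀ i : Fin t, b i.castSucc ≤ a i.castSucc)
    (hlast : ∀ i : Fin t, a i.castSucc ≤ a (Fin.last t)) (hsum : ∑ i, b i = ∑ i, a i) :
    ∑ i, a i ^ 2 ≤ ∑ i, b i ^ 2 := by
  set D := ∑ i : Fin t, (a i.castSucc - b i.castSucc)
  have hb_last : b (Fin.last t) = a (Fin.last t) + D := by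
    rw [Fin.sum_univ_castSucc, Fin.sum_univ_castSucc] at hsum
    have hD_eq : D = ∑ i : Fin t, a i.castSucc - ∑ i : Fin t, b i.castSucc :=
      Finset.sum_sub_distrib _ _
    linear_combination hsum - hD_eq
  have hinit : ∑ i : Fin t, (a i.castSucc ^ 2 - b i.castSucc ^ 2) ≤ 2 * a (Fin.last t) * D := by
    rw [Finset.mul_sum]
    refine Finset.sum_le_sum fun i _ => ?_
    nlinarith [hle i, hlast i]
  rw [Finset.sum_sub_distrib] at hinit
  rw [Fin.sum_univ_castSucc, Fin.sum_univ_castSucc (f := fun i => b i ^ 2), hb_last]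
  nlinarith [sq_nonneg D]

theorem StrictMono.apply_zero_add_le {t : ℕ} {f : Fin (t + 1) → ℤ} (hf : StrictMono f)
    (i : Fin (t + 1)) : f 0 + i ≤ f i := by
  induction i using Fin.induction with
  | zero => simp
  | succ j ih =>
    have := hf j.castSucc_lt_succ
    simp only [Fin.val_castSucc, Fin.val_succ] at *
    push_cast
    omega

theorem Fin.two_mul_sum_val_add_one (t : ℕ) :
    2 * ∑ i : Fin t, ((i : ℕ) + 1 : ℤ) = (t + 1) * t := by
  induction t with
  | zero => simp
  | succ k ih =>
    rw [Fin.sum_univ_castSucc]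
    simp only [Fin.val_castSucc, Fin.val_last]
    push_cast
    linear_combination ih

theorem v_is_lex_min (s n : ℕ) (hs : 2 ≤ s)
    (v : Fin s → ℤ)
    (hv : v = fun i : Fin s => if (i : ℕ) < s - 1 then ((i : ℕ) : ℤ) + 1
      else (n : ℤ) - ((s : ℤ) * ((s : ℤ) - 1)) / 2) :
    ∀ a : Fin s → ℤ, StrictMono a → 1 ≤ a ⟨0, by omega⟩ → (∑ i, a i) = n →
      toLex v ≤ toLex a ∧
      ((n : ℤ) ^ 2 - ∑ i, (v i) ^ 2) / 2 ≤ ((n : ℤ) ^ 2 - ∑ i, (a i) ^ 2) / 2 := by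
  intro a ha ha0 hsum
  obtain ⟨t, rfl⟩ : ∃ t, s = t + 1 := ⟨s - 1, by omega⟩
  have hv_init : ∀ i : Fin t, v i.castSucc = (i : ℕ) + 1 := fun i => by simp [hv]
  have hv_sum : ∑ i, v i = n := by
    have hgauss : ((t + 1 : ℕ) : ℤ) * ((t + 1 : ℕ) - 1) = 2 * ∑ i : Fin t, ((i : ℕ) + 1 : ℤ) := by
      rw [Fin.two_mul_sum_val_add_one]
      push_cast
      ring
    rw [Fin.sum_univ_castSucc, Finset.sum_congr rfl fun i _ => hv_init i]
    simp only [hv, Fin.val_last, Nat.add_sub_cancel, lt_irrefl, if_false, hgauss,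
      Int.mul_ediv_cancel_left _ two_ne_zero]
    ring
  have hle : ∀ i : Fin t, v i.castSucc ≤ a i.castSucc := fun i => by
    have hi := ha.apply_zero_add_le i.castSucc
    rw [Fin.val_castSucc] at hi
    rw [hv_init, add_comm]
    exact (add_le_add_left ha0 _).trans hi
  have hlast : ∀ i : Fin t, a i.castSucc ≤ a (Fin.last t) := fun i =>
    ha.monotone (Fin.castSucc_lt_last i).le
  rw [← hsum] at hv_sum
  exact ⟨Fin.toLex_le_of_castSucc_le_of_sum_eq hle hv_sum,
    Int.ediv_le_ediv two_pos (sub_le_sub_left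
      (Fin.sum_sq_le_of_castSucc_le_of_sum_eq hle hlast hv_sum) _)⟩
end

section
/- With the notation above, if the block sizes m₁ < m₂ < ⋯ < m_q are mutually distinct, then the group G = {σ ∈ S_N : σ preserves the set of inter-block pairs} equals the direct product G₁ × G₂ × ⋯ × G_q, where G_r is the subgroup of permutations of {1,…,N} fixing every element outside A_r. -/
/-!
If σ never merges two different blocks, then σ⁻¹ maps the block of σ i into the block of i, so
the size c(σ i) of the block containing σ i is at most the size c(i) of the block containing i.
Since σ is a bijection, ∑ c(σ i) = ∑ c(i), forcing c(σ i) = c(i) for every i; as distinct blocks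
have distinct sizes, σ i and i lie in the same block.
-/

open Finset

theorem Equiv.Perm.apply_eq_of_forall_apply_le {α M : Type*} [Fintype α] [AddCommMonoid M]
    [PartialOrder M] [IsOrderedCancelAddMonoid M] (σ : Equiv.Perm α) {f : α → M}
    (h : ∀ i, f (σ i) ≤ f i) (i : α) : f (σ i) = f i :=
  (sum_eq_sum_iff_of_le fun i _ => h i).mp (Equiv.sum_comp σ f) i (mem_univ i)

theorem card_fiber_perm_apply_le {α β : Type*} [Fintype α] [DecidableEq β] (B : α → β)
    {σ : Equiv.Perm α} (hσ : ∀ i j, B (σ i) = B (σ j) → B i = B j) (i : α) :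
    #{j | B j = B (σ i)} ≤ #{j | B j = B i} :=
  calc #{j | B j = B (σ i)}
      = #{j | B (σ j) = B (σ i)} :=
        card_nbij' σ.symm σ (fun _ hj => by simpa using hj) (fun _ hj => by simpa using hj)
          (fun _ _ => σ.apply_symm_apply _) (fun _ _ => σ.symm_apply_apply _)
    _ ≤ #{j | B j = B i} := card_le_card fun j hj => by
        simp only [mem_filter, mem_univ, true_and] at hj ⊢
        exact hσ j i hj

theorem G_eq_product_of_block_groups_general (N q : ℕ) (B : Fin N → Fin q)
    (hsizes : ∀ r s : Fin q, r ≠ s →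
      (Finset.univ.filter fun i => B i = r).card ≠
        (Finset.univ.filter fun i => B i = s).card) :
    ∀ σ : Equiv.Perm (Fin N),
      (∀ i j : Fin N, B i ≠ B j → B (σ i) ≠ B (σ j)) ↔ (∀ i : Fin N, B (σ i) = B i) := by
  intro σ
  refine ⟨fun h i => ?_, fun h i j hne => by rwa [h i, h j]⟩
  have hσ : ∀ i j, B (σ i) = B (σ j) → B i = B j := fun i j => not_imp_not.mp (h i j)
  have hcard : #{j | B j = B (σ i)} = #{j | B j = B i} :=
    σ.apply_eq_of_forall_apply_le (f := fun i => #{j | B j = B i}) (card_fiber_perm_apply_le B hσ) i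
  by_contra hne
  exact hsizes _ _ hne hcard

theorem G_eq_product_of_block_groups (N q : ℕ) (B : Fin N → Fin q)
    (hB : Function.Surjective B)
    (hsizes : ∀ r s : Fin q, r ≠ s →
      (Finset.univ.filter fun i => B i = r).card ≠
        (Finset.univ.filter fun i => B i = s).card) :
    ∀ σ : Equiv.Perm (Fin N),
      (∀ i j : Fin N, B i ≠ B j → B (σ i) ≠ B (σ j)) ↔ (∀ i : Fin N, B (σ i) = B i) :=
  G_eq_product_of_block_groups_general N q B hsizes
end
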